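/- arXiv:2011.02695 — 6 statements merged into one kernel-verified Lean document; each statement's English description precedes it below -/
import Mathlib

section
/- Let u ∈ V with G(u) < ∞, let τ > 0, and for each k = 1,…,N let w_k ∈ V_k be a minimizer over V_k of the map w ↦ E(u + R_k^* w). Set u⁺ = u + τ·Σ_{k=1}^N R_k^* w_k. Then u⁺ is a minimizer over V of the functional w ↦ F(u) + ⟨F'(u), w − u⟩ + M_τ(w, u). (Generalized additive Schwarz lemma.) -/
/-!
Since `F'(u)` is linear, on every splitting `z - u = τ ∑ₖ Rₖ zₖ` the linear term is absorbed by the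
Bregman distances:
`F'(u)(z - u) + τ ∑ₖ (D_F(u + Rₖ zₖ, u) + G(u + Rₖ zₖ)) = τ ∑ₖ (E(u + Rₖ zₖ) - F(u))`.
So the infimum defining `M_τ(z, u)` decouples into `N` local problems, each solved by `wₖ`: the
surrogate is bounded below by `τ ∑ₖ E(u + Rₖ wₖ)` plus terms independent of `z`, and the splitting
`(wₖ)` of `u⁺ - u` attains this bound.
-/

open Finset

namespace EReal

lemma coe_finset_sum {ι : Type*} (s : Finset ι) (f : ι → ℝ) :
    ((∑ i ∈ s, f i : ℝ) : EReal) = ∑ i ∈ s, (f i : EReal) :=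
  map_sum (⟨⟨(↑), coe_zero⟩, coe_add⟩ : ℝ →+ EReal) f s

lemma coe_add_mul_add_coe {τ : ℝ} (hτ : 0 ≤ τ) (A : EReal) (a c : ℝ) :
    (a : EReal) + τ * (A + c) = τ * A + ((a + τ * c : ℝ) : EReal) := by
  rw [left_distrib_of_nonneg_of_ne_top (EReal.coe_nonneg.2 hτ) (coe_ne_top τ), ← coe_mul,
    add_left_comm, coe_add]

end EReal

section AdditiveSchwarz

variable {V : Type*} [AddCommGroup V] {L : Type*} [FunLike L V ℝ]

def bregmanDist (F : V → ℝ) (F' : V → L) (x y : V) : ℝ := F x - F y - F' y (x - y)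

lemma coe_bregmanDist_add_eq (F : V → ℝ) (F' : V → L) (G : V → EReal) (v h : V) :
    (bregmanDist F F' (v + h) v : EReal) + G (v + h)
      = ((F (v + h) : EReal) + G (v + h)) + ((-(F v + F' v h) : ℝ) : EReal) := by
  rw [bregmanDist, add_sub_cancel_left, add_right_comm, ← EReal.coe_add]
  congr 2
  ring

variable [Module ℝ V] [LinearMapClass L ℝ V ℝ] {ι : Type*} [Fintype ι] {Vk : ι → Type*}

/-- `M_τ(x, v)` is built from the infimum of this set for `φₖ z = D_F(v + Rₖ z, v) + G(v + Rₖ z)`. -/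
def splittingCosts (R : ∀ k, Vk k → V) (φ : ∀ k, Vk k → EReal) (τ : ℝ) (v x : V) : Set EReal :=
  {s | ∃ w : ∀ k, Vk k, x - v = τ • ∑ k, R k (w k) ∧ s = ∑ k, φ k (w k)}

variable (R : ∀ k, Vk k → V) (F : V → ℝ) (F' : V → L) (G : V → EReal) {τ : ℝ} (v : V)

lemma sum_coe_bregmanDist_add_eq (hτ : τ ≠ 0) {x : V} {w : ∀ k, Vk k}
    (hx : x - v = τ • ∑ k, R k (w k)) :
    ∑ k, ((bregmanDist F F' (v + R k (w k)) v : EReal) + G (v + R k (w k)))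
      = ∑ k, ((F (v + R k (w k)) : EReal) + G (v + R k (w k)))
        + ((-(Fintype.card ι * F v + F' v (x - v) / τ) : ℝ) : EReal) := by
  simp_rw [coe_bregmanDist_add_eq, sum_add_distrib, ← EReal.coe_finset_sum]
  congr 2
  rw [hx, map_smul, map_sum, smul_eq_mul, mul_div_cancel_left₀ _ hτ, sum_neg_distrib,
    sum_add_distrib, sum_const, card_univ, nsmul_eq_mul]

variable {R F F' G v}

lemma sum_add_coe_le_of_mem_splittingCosts (hτ : τ ≠ 0) {w : ∀ k, Vk k}
    (hw : ∀ k z, (F (v + R k (w k)) : EReal) + G (v + R k (w k)) ≤ F (v + R k z) + G (v + R k z))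
    {x : V} {s : EReal}
    (hs : s ∈ splittingCosts R (fun k z ↦ bregmanDist F F' (v + R k z) v + G (v + R k z)) τ v x) :
    ∑ k, ((F (v + R k (w k)) : EReal) + G (v + R k (w k)))
      + ((-(Fintype.card ι * F v + F' v (x - v) / τ) : ℝ) : EReal) ≤ s := by
  obtain ⟨w', hx, rfl⟩ := hs
  rw [sum_coe_bregmanDist_add_eq R F F' G v hτ hx]
  exact add_le_add_left (sum_le_sum fun k _ ↦ hw k (w' k)) _

lemma sInf_splittingCosts_update (hτ : τ ≠ 0) {w : ∀ k, Vk k}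
    (hw : ∀ k z, (F (v + R k (w k)) : EReal) + G (v + R k (w k)) ≤ F (v + R k z) + G (v + R k z)) :
    sInf (splittingCosts R (fun k z ↦ bregmanDist F F' (v + R k z) v + G (v + R k z)) τ v
        (v + τ • ∑ k, R k (w k)))
      = ∑ k, ((F (v + R k (w k)) : EReal) + G (v + R k (w k)))
        + ((-(Fintype.card ι * F v + F' v (v + τ • ∑ k, R k (w k) - v) / τ) : ℝ) : EReal) := by
  have hx : v + τ • ∑ k, R k (w k) - v = τ • ∑ k, R k (w k) := add_sub_cancel_left _ _
  refine IsLeast.csInf_eq ⟨⟨w, hx, ?_⟩, fun s hs ↦ sum_add_coe_le_of_mem_splittingCosts hτ hw hs⟩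
  rw [sum_coe_bregmanDist_add_eq R F F' G v hτ hx]

lemma le_coe_add_mul_sInf_splittingCosts (hτ : 0 < τ) {w : ∀ k, Vk k}
    (hw : ∀ k z, (F (v + R k (w k)) : EReal) + G (v + R k (w k)) ≤ F (v + R k z) + G (v + R k z))
    (x : V) :
    τ * ∑ k, ((F (v + R k (w k)) : EReal) + G (v + R k (w k)))
        + ((-(τ * Fintype.card ι * F v)) : ℝ)
      ≤ (F' v (x - v) : EReal)
        + τ * sInf (splittingCosts R (fun k z ↦ bregmanDist F F' (v + R k z) v + G (v + R k z))
          τ v x) := by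
  calc _ = (F' v (x - v) : EReal) + τ * (∑ k, ((F (v + R k (w k)) : EReal) + G (v + R k (w k)))
          + ((-(Fintype.card ι * F v + F' v (x - v) / τ) : ℝ) : EReal)) := by
        rw [EReal.coe_add_mul_add_coe hτ.le]
        congr 2
        field_simp
        ring
    _ ≤ _ := by
        gcongr
        exact le_sInf fun s hs ↦ sum_add_coe_le_of_mem_splittingCosts hτ.ne' hw hs

lemma coe_add_mul_sInf_splittingCosts_update (hτ : 0 < τ) {w : ∀ k, Vk k}
    (hw : ∀ k z, (F (v + R k (w k)) : EReal) + G (v + R k (w k)) ≤ F (v + R k z) + G (v + R k z)) :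
    (F' v (v + τ • ∑ k, R k (w k) - v) : EReal)
        + τ * sInf (splittingCosts R (fun k z ↦ bregmanDist F F' (v + R k z) v + G (v + R k z))
          τ v (v + τ • ∑ k, R k (w k)))
      = τ * ∑ k, ((F (v + R k (w k)) : EReal) + G (v + R k (w k)))
        + ((-(τ * Fintype.card ι * F v)) : ℝ) := by
  rw [sInf_splittingCosts_update hτ.ne' hw, EReal.coe_add_mul_add_coe hτ.le]
  congr 2
  field_simp
  ring

end AdditiveSchwarz

theorem generalized_additive_schwarz_lemma_general
    {V : Type*} [NormedAddCommGroup V] [NormedSpace ℝ V]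
    {N : ℕ} (Vk : Fin N → Type*) [∀ k, NormedAddCommGroup (Vk k)]
    [∀ k, NormedSpace ℝ (Vk k)]
    (R : ∀ k, Vk k →L[ℝ] V)
    -- F : V → ℝ Fréchet differentiable and convex, with derivative F'
    (F : V → ℝ) (F' : V → V →L[ℝ] ℝ)
    -- G : V → ℝ ∪ {+∞} proper convex
    (G : V → EReal)
    -- E = F + G
    (E : V → EReal) (hE : ∀ v, E v = (F v : EReal) + G v)
    -- Bregman distance of F
    (DF : V → V → ℝ) (hDF : ∀ x y, DF x y = F x - F y - F' y (x - y))
    -- step size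
    (τ : ℝ) (hτ : 0 < τ)
    -- the functional M_τ
    (Mτ : V → V → EReal)
    (hMτ : ∀ x v, Mτ x v =
      (τ : EReal) * sInf { s : EReal | ∃ w : ∀ k, Vk k,
          x - v = τ • ∑ k, R k (w k) ∧
          s = ∑ k, (((DF (v + R k (w k)) v : ℝ) : EReal) + G (v + R k (w k))) }
        + ((1 - τ * N : ℝ) : EReal) * G v)
    -- the current iterate, with G(u) < ∞
    (u : V)
    -- the local minimizers
    (w : ∀ k, Vk k)
    (hw : ∀ k, ∀ z : Vk k, E (u + R k (w k)) ≤ E (u + R k z))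
    -- the additive Schwarz update
    (uplus : V) (huplus : uplus = u + τ • ∑ k, R k (w k)) :
    ∀ z : V,
      ((F u : ℝ) : EReal) + ((F' u (uplus - u) : ℝ) : EReal) + Mτ uplus u ≤
      ((F u : ℝ) : EReal) + ((F' u (z - u) : ℝ) : EReal) + Mτ z u := by
  intro z
  obtain rfl : DF = bregmanDist F F' := funext₂ hDF
  simp only [hE] at hw
  have hbound := le_coe_add_mul_sInf_splittingCosts (R := fun k ↦ R k) (F' := F') hτ hw z
  rw [← coe_add_mul_sInf_splittingCosts_update (F' := F') hτ hw, ← huplus] at hbound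
  rw [hMτ, hMτ, ← add_assoc, ← add_assoc]
  gcongr ?_ + _
  rw [add_assoc, add_assoc]
  exact add_le_add_right hbound _

/-- Generalized additive Schwarz lemma: the additive Schwarz update
`u⁺ = u + τ ∑ₖ Rₖ* wₖ`, where each `wₖ` minimizes `w ↦ E(u + Rₖ* w)`, is a minimizer
of the surrogate functional `w ↦ F(u) + ⟨F'(u), w − u⟩ + M_τ(w, u)`. -/
theorem generalized_additive_schwarz_lemma
    {V : Type*} [NormedAddCommGroup V] [NormedSpace ℝ V]
    {N : ℕ} (Vk : Fin N → Type*) [∀ k, NormedAddCommGroup (Vk k)]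
    [∀ k, NormedSpace ℝ (Vk k)]
    (R : ∀ k, Vk k →L[ℝ] V)
    -- space decomposition V = ∑ₖ Rₖ* Vk
    (hdecomp : ∀ v : V, ∃ w : ∀ k, Vk k, v = ∑ k, R k (w k))
    -- F : V → ℝ Fréchet differentiable and convex, with derivative F'
    (F : V → ℝ) (F' : V → V →L[ℝ] ℝ)
    (hF : ∀ v, HasFDerivAt F (F' v) v)
    (hFconv : ConvexOn ℝ Set.univ F)
    -- G : V → ℝ ∪ {+∞} proper convex
    (G : V → EReal)
    (hGnotbot : ∀ v, G v ≠ ⊥)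
    (hGproper : ∃ v, G v ≠ ⊤)
    (hGconv : ∀ x y : V, ∀ t : ℝ, 0 ≤ t → t ≤ 1 →
      G (t • x + (1 - t) • y) ≤ (t : EReal) * G x + ((1 - t : ℝ) : EReal) * G y)
    -- E = F + G
    (E : V → EReal) (hE : ∀ v, E v = (F v : EReal) + G v)
    -- Bregman distance of F
    (DF : V → V → ℝ) (hDF : ∀ x y, DF x y = F x - F y - F' y (x - y))
    -- step size
    (τ : ℝ) (hτ : 0 < τ)
    -- the functional M_τ
    (Mτ : V → V → EReal)
    (hMτ : ∀ x v, Mτ x v =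
      (τ : EReal) * sInf { s : EReal | ∃ w : ∀ k, Vk k,
          x - v = τ • ∑ k, R k (w k) ∧
          s = ∑ k, (((DF (v + R k (w k)) v : ℝ) : EReal) + G (v + R k (w k))) }
        + ((1 - τ * N : ℝ) : EReal) * G v)
    -- the current iterate, with G(u) < ∞
    (u : V) (hu : G u ≠ ⊤)
    -- the local minimizers
    (w : ∀ k, Vk k)
    (hw : ∀ k, ∀ z : Vk k, E (u + R k (w k)) ≤ E (u + R k z))
    -- the additive Schwarz update
    (uplus : V) (huplus : uplus = u + τ • ∑ k, R k (w k)) :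
    ∀ z : V,
      ((F u : ℝ) : EReal) + ((F' u (uplus - u) : ℝ) : EReal) + Mτ uplus u ≤
      ((F u : ℝ) : EReal) + ((F' u (z - u) : ℝ) : EReal) + Mτ z u :=
  generalized_additive_schwarz_lemma_general Vk R F F' G E hE DF hDF τ hτ Mτ hMτ u w hw uplus huplus
end

section
/- For every z ∈ V, ⟨Mz, z⟩ = min{ Σ_{k=1}^N ⟨A_k w_k, w_k⟩ : w_k ∈ V_k, z = Σ_{k=1}^N R_k^* w_k }, i.e., the quadratic form of the additive Schwarz preconditioner M equals the minimal sum of local energies over all decompositions of z. (Additive Schwarz lemma.) -/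
/-!
With `y := Mz` and `w₀ₖ := Aₖ⁻¹ Rₖ y` one has `Aₖ w₀ₖ = Rₖ y`, so for every family `w`
the cross term `∑ₖ ⟨Aₖ w₀ₖ, wₖ⟩` equals `⟨y, ∑ₖ Rₖ* wₖ⟩`. Since `∑ₖ Rₖ* w₀ₖ = M⁻¹ M z = z`,
`w₀` decomposes `z` with energy `⟨Mz, z⟩`, and any other decomposition `w` of `z` has the same
cross term; positivity of `Aₖ` at `wₖ - w₀ₖ` then shows that its energy is at least `⟨Mz, z⟩`.
-/

open RealInnerProductSpace

namespace LinearMap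

variable {E F : Type*} [NormedAddCommGroup E] [InnerProductSpace ℝ E]
  [NormedAddCommGroup F] [InnerProductSpace ℝ F]

theorem IsPositive.of_inner_eq_inner_map {A : F →ₗ[ℝ] F} (hA : A.IsPositive)
    {B : E →ₗ[ℝ] E} (R : E →ₗ[ℝ] F) (hB : ∀ x y, ⟪B x, y⟫ = ⟪A (R x), R y⟫) :
    B.IsPositive := by
  refine (isPositive_iff B).2 ⟨fun x y => ?_, fun x => hB x x ▸ hA.inner_nonneg_left _⟩
  rw [hB, hA.isSymmetric, real_inner_comm, ← hB, real_inner_comm]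

theorem IsPositive.two_mul_inner_sub_inner_le {T : E →ₗ[ℝ] E} (hT : T.IsPositive) (x y : E) :
    2 * ⟪T x, y⟫ - ⟪T x, x⟫ ≤ ⟪T y, y⟫ := by
  have h := hT.inner_nonneg_left (y - x)
  rw [map_sub, inner_sub_left, inner_sub_right, inner_sub_right, hT.isSymmetric y x,
    real_inner_comm (T x) y] at h
  linarith

end LinearMap

section Decomposition

variable {ι : Type*} [Fintype ι] {E : ι → Type*} [∀ i, NormedAddCommGroup (E i)]
  [∀ i, InnerProductSpace ℝ (E i)] [∀ i, FiniteDimensional ℝ (E i)]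
  {F : Type*} [NormedAddCommGroup F] [InnerProductSpace ℝ F] [FiniteDimensional ℝ F]
  {B : ∀ i, E i →ₗ[ℝ] E i} (R : ∀ i, E i →ₗ[ℝ] F) {y : F} {w₀ : ∀ i, E i}

theorem sum_inner_eq_inner_sum_of_apply_eq_adjoint (hw₀ : ∀ i, B i (w₀ i) = (R i).adjoint y)
    (w : ∀ i, E i) : ∑ i, ⟪B i (w₀ i), w i⟫ = ⟪y, ∑ i, R i (w i)⟫ := by
  simp only [hw₀, LinearMap.adjoint_inner_left, inner_sum]

theorem sum_inner_le_sum_inner_of_apply_eq_adjoint (hB : ∀ i, (B i).IsPositive)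
    (hw₀ : ∀ i, B i (w₀ i) = (R i).adjoint y) {w : ∀ i, E i}
    (hw : ∑ i, R i (w i) = ∑ i, R i (w₀ i)) :
    ∑ i, ⟪B i (w₀ i), w₀ i⟫ ≤ ∑ i, ⟪B i (w i), w i⟫ := by
  have hcross : ∑ i, ⟪B i (w₀ i), w i⟫ = ∑ i, ⟪B i (w₀ i), w₀ i⟫ := by
    rw [sum_inner_eq_inner_sum_of_apply_eq_adjoint R hw₀, hw,
      sum_inner_eq_inner_sum_of_apply_eq_adjoint R hw₀]
  calc ∑ i, ⟪B i (w₀ i), w₀ i⟫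
      = ∑ i, (2 * ⟪B i (w₀ i), w i⟫ - ⟪B i (w₀ i), w₀ i⟫) := by
        rw [Finset.sum_sub_distrib, ← Finset.mul_sum, hcross]; ring
    _ ≤ ∑ i, ⟪B i (w i), w i⟫ :=
        Finset.sum_le_sum fun i _ => (hB i).two_mul_inner_sub_inner_le _ _

end Decomposition

theorem additive_schwarz_lemma_general
    {V : Type*} [NormedAddCommGroup V] [InnerProductSpace ℝ V] [FiniteDimensional ℝ V]
    {N : ℕ} (Vk : Fin N → Type*) [∀ k, NormedAddCommGroup (Vk k)]
    [∀ k, InnerProductSpace ℝ (Vk k)] [∀ k, FiniteDimensional ℝ (Vk k)]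
    -- A self-adjoint positive definite
    (A : V →ₗ[ℝ] V) (hAsym : A.IsSymmetric)
    (hApd : ∀ v : V, v ≠ 0 → 0 < ⟪A v, v⟫)
    -- the maps Rₖ* with surjective adjoints Rₖ
    (Rstar : ∀ k, Vk k →ₗ[ℝ] V)
    -- local stiffness operators Aₖ and their inverses
    (Ak : ∀ k, Vk k →ₗ[ℝ] Vk k)
    (hAk : ∀ k, ∀ x y : Vk k, ⟪Ak k x, y⟫ = ⟪A (Rstar k x), Rstar k y⟫)
    (AkInv : ∀ k, Vk k →ₗ[ℝ] Vk k)
    (hAkInv₂ : ∀ k, Ak k ∘ₗ AkInv k = LinearMap.id)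
    -- the additive Schwarz preconditioner M = (∑ₖ Rₖ* Aₖ⁻¹ Rₖ)⁻¹
    (M : V →ₗ[ℝ] V)
    (hM₂ : (∑ k, Rstar k ∘ₗ AkInv k ∘ₗ LinearMap.adjoint (Rstar k)) ∘ₗ M = LinearMap.id) :
    ∀ z : V,
      IsLeast { s : ℝ | ∃ w : ∀ k, Vk k,
          z = ∑ k, Rstar k (w k) ∧ s = ∑ k, ⟪Ak k (w k), w k⟫ } ⟪M z, z⟫ := by
  intro z
  have hApos : A.IsPositive := (LinearMap.isPositive_iff A).2 ⟨hAsym, fun v => by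
    rcases eq_or_ne v 0 with rfl | hv
    exacts [by simp, (hApd v hv).le]⟩
  have hAkpos k : (Ak k).IsPositive := hApos.of_inner_eq_inner_map (Rstar k) (hAk k)
  set w₀ : ∀ k, Vk k := fun k => AkInv k (LinearMap.adjoint (Rstar k) (M z))
  have hAkw₀ k : Ak k (w₀ k) = LinearMap.adjoint (Rstar k) (M z) :=
    LinearMap.congr_fun (hAkInv₂ k) _
  have hw₀ : ∑ k, Rstar k (w₀ k) = z := by
    simpa [LinearMap.sum_apply, w₀] using LinearMap.congr_fun hM₂ z
  have henergy : ∑ k, ⟪Ak k (w₀ k), w₀ k⟫ = ⟪M z, z⟫ := by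
    rw [sum_inner_eq_inner_sum_of_apply_eq_adjoint Rstar hAkw₀, hw₀]
  refine ⟨⟨w₀, hw₀.symm, henergy.symm⟩, ?_⟩
  rintro s ⟨w, hz, rfl⟩
  exact henergy ▸
    sum_inner_le_sum_inner_of_apply_eq_adjoint Rstar hAkpos hAkw₀ (hz.symm.trans hw₀.symm)

/-- Additive Schwarz lemma: for every `z ∈ V`, the quadratic form `⟨Mz, z⟩` of the
additive Schwarz preconditioner `M = (∑ₖ Rₖ* Aₖ⁻¹ Rₖ)⁻¹` equals the minimum of
`∑ₖ ⟨Aₖ wₖ, wₖ⟩` over all decompositions `z = ∑ₖ Rₖ* wₖ`. -/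
theorem additive_schwarz_lemma
    {V : Type*} [NormedAddCommGroup V] [InnerProductSpace ℝ V] [FiniteDimensional ℝ V]
    {N : ℕ} (Vk : Fin N → Type*) [∀ k, NormedAddCommGroup (Vk k)]
    [∀ k, InnerProductSpace ℝ (Vk k)] [∀ k, FiniteDimensional ℝ (Vk k)]
    -- A self-adjoint positive definite
    (A : V →ₗ[ℝ] V) (hAsym : A.IsSymmetric)
    (hApd : ∀ v : V, v ≠ 0 → 0 < ⟪A v, v⟫)
    -- the maps Rₖ* with surjective adjoints Rₖ
    (Rstar : ∀ k, Vk k →ₗ[ℝ] V)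
    (hsurj : ∀ k, Function.Surjective (LinearMap.adjoint (Rstar k)))
    -- space decomposition V = ∑ₖ Rₖ* Vk
    (hdecomp : ∀ v : V, ∃ w : ∀ k, Vk k, v = ∑ k, Rstar k (w k))
    -- local stiffness operators Aₖ and their inverses
    (Ak : ∀ k, Vk k →ₗ[ℝ] Vk k)
    (hAk : ∀ k, ∀ x y : Vk k, ⟪Ak k x, y⟫ = ⟪A (Rstar k x), Rstar k y⟫)
    (AkInv : ∀ k, Vk k →ₗ[ℝ] Vk k)
    (hAkInv₁ : ∀ k, AkInv k ∘ₗ Ak k = LinearMap.id)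
    (hAkInv₂ : ∀ k, Ak k ∘ₗ AkInv k = LinearMap.id)
    -- the additive Schwarz preconditioner M = (∑ₖ Rₖ* Aₖ⁻¹ Rₖ)⁻¹
    (M : V →ₗ[ℝ] V)
    (hM₁ : M ∘ₗ (∑ k, Rstar k ∘ₗ AkInv k ∘ₗ LinearMap.adjoint (Rstar k)) = LinearMap.id)
    (hM₂ : (∑ k, Rstar k ∘ₗ AkInv k ∘ₗ LinearMap.adjoint (Rstar k)) ∘ₗ M = LinearMap.id) :
    ∀ z : V,
      IsLeast { s : ℝ | ∃ w : ∀ k, Vk k,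
          z = ∑ k, Rstar k (w k) ∧ s = ∑ k, ⟪Ak k (w k), w k⟫ } ⟪M z, z⟫ :=
  additive_schwarz_lemma_general Vk A hAsym hApd Rstar Ak hAk AkInv hAkInv₂ M hM₂
end

section
/- If F(u) = ½⟨Au, u⟩ − ⟨f, u⟩ and G = 0, then for all u, v ∈ V the functional M_τ of the generalized additive Schwarz lemma satisfies M_τ(u, v) = (1/(2τ))⟨M(u − v), u − v⟩, where M = (Σ_{k=1}^N R_k^* A_k^{-1} R_k)^{-1} is the additive Schwarz preconditioner; that is, the generalized additive Schwarz surrogate reduces to the quadratic preconditioned surrogate in the linear case. -/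
open RealInnerProductSpace

/-!
Write `P = ∑ₖ Rₖ* Aₖ⁻¹ Rₖ`, so that `M = P⁻¹`. For a target `y = (u - v)/τ`, the decomposition
`aₖ = Aₖ⁻¹ Rₖ M y` is admissible (`∑ₖ Rₖ* aₖ = P M y = y`) and satisfies
`⟨A Rₖ* aₖ, Rₖ* wₖ⟩ = ⟨M y, Rₖ* wₖ⟩` for every `wₖ`. Completing the square around `a` then shows
that every admissible decomposition has energy `½ ∑ₖ ⟨A Rₖ* wₖ, Rₖ* wₖ⟩ ≥ ½ ⟨M y, y⟩`, with
equality at `a`; rescaling by `τ` finishes.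
-/

theorem LinearMap.IsSymmetric.inner_map_self_add_two_inner_le {E : Type*}
    [NormedAddCommGroup E] [InnerProductSpace ℝ E] {A : E →ₗ[ℝ] E} (hA : A.IsSymmetric)
    (hpos : ∀ x, 0 ≤ ⟪A x, x⟫) (x y : E) :
    ⟪A y, y⟫ + 2 * ⟪A y, x - y⟫ ≤ ⟪A x, x⟫ := by
  have hsq := hpos (x - y)
  have hxy : ⟪A x, y⟫ = ⟪A y, x⟫ := by rw [hA, real_inner_comm]
  simp only [map_sub, inner_sub_left, inner_sub_right] at hsq ⊢
  linarith

namespace AdditiveSchwarz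

variable {V : Type*} [NormedAddCommGroup V] [InnerProductSpace ℝ V] [FiniteDimensional ℝ V]
  {ι : Type*} [Fintype ι] {Vk : ι → Type*} [∀ k, NormedAddCommGroup (Vk k)]
  [∀ k, InnerProductSpace ℝ (Vk k)] [∀ k, FiniteDimensional ℝ (Vk k)]
  (A : V →ₗ[ℝ] V) (R : ∀ k, Vk k →ₗ[ℝ] V)

/-- The energy `∑ₖ D_F(v + Rₖ* wₖ, v)` of a decomposition `w`. -/
noncomputable def decompositionEnergy (w : ∀ k, Vk k) : ℝ :=
  ∑ k, (1 / 2) * ⟪A (R k (w k)), R k (w k)⟫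

noncomputable def optimalDecomposition (AkInv : ∀ k, Vk k →ₗ[ℝ] Vk k) (M : V →ₗ[ℝ] V) (y : V) :
    ∀ k, Vk k :=
  fun k => AkInv k (LinearMap.adjoint (R k) (M y))

variable {A R} {Ak AkInv : ∀ k, Vk k →ₗ[ℝ] Vk k} {M : V →ₗ[ℝ] V}

theorem sum_optimalDecomposition
    (hM : (∑ k, R k ∘ₗ AkInv k ∘ₗ LinearMap.adjoint (R k)) ∘ₗ M = LinearMap.id) (y : V) :
    ∑ k, R k (optimalDecomposition R AkInv M y k) = y := by
  simpa [optimalDecomposition, LinearMap.sum_apply] using LinearMap.congr_fun hM y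

theorem sum_inner_optimalDecomposition
    (hAk : ∀ k, ∀ x y : Vk k, ⟪Ak k x, y⟫ = ⟪A (R k x), R k y⟫)
    (hAkInv : ∀ k, Ak k ∘ₗ AkInv k = LinearMap.id) (y : V) (w : ∀ k, Vk k) :
    ∑ k, ⟪A (R k (optimalDecomposition R AkInv M y k)), R k (w k)⟫ = ⟪M y, ∑ k, R k (w k)⟫ := by
  rw [inner_sum]
  refine Finset.sum_congr rfl fun k _ => ?_
  rw [← hAk, optimalDecomposition, ← LinearMap.comp_apply, hAkInv, LinearMap.id_apply,
    LinearMap.adjoint_inner_left]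

variable (hAk : ∀ k, ∀ x y : Vk k, ⟪Ak k x, y⟫ = ⟪A (R k x), R k y⟫)
  (hAkInv : ∀ k, Ak k ∘ₗ AkInv k = LinearMap.id)
  (hM : (∑ k, R k ∘ₗ AkInv k ∘ₗ LinearMap.adjoint (R k)) ∘ₗ M = LinearMap.id)
include hAk hAkInv hM

theorem decompositionEnergy_optimalDecomposition (y : V) :
    decompositionEnergy A R (optimalDecomposition R AkInv M y) = (1 / 2) * ⟪M y, y⟫ := by
  rw [decompositionEnergy, ← Finset.mul_sum, sum_inner_optimalDecomposition hAk hAkInv,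
    sum_optimalDecomposition hM]

theorem inner_le_decompositionEnergy (hA : A.IsSymmetric) (hpos : ∀ x, 0 ≤ ⟪A x, x⟫)
    {y : V} {w : ∀ k, Vk k} (hw : ∑ k, R k (w k) = y) :
    (1 / 2) * ⟪M y, y⟫ ≤ decompositionEnergy A R w := by
  set a := optimalDecomposition R AkInv M y
  -- the cross terms sum to `⟨M y, ∑ₖ Rₖ* (wₖ - aₖ)⟩ = ⟨M y, y - y⟩ = 0`
  have hcross : ∑ k, ⟪A (R k (a k)), R k (w k) - R k (a k)⟫ = 0 := by
    simp_rw [inner_sub_right]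
    rw [Finset.sum_sub_distrib, sum_inner_optimalDecomposition hAk hAkInv,
      sum_inner_optimalDecomposition hAk hAkInv, hw, sum_optimalDecomposition hM, sub_self]
  have hsq : ∑ k, (⟪A (R k (a k)), R k (a k)⟫ + 2 * ⟪A (R k (a k)), R k (w k) - R k (a k)⟫)
      ≤ ∑ k, ⟪A (R k (w k)), R k (w k)⟫ :=
    Finset.sum_le_sum fun k _ => hA.inner_map_self_add_two_inner_le hpos _ _
  have hopt := decompositionEnergy_optimalDecomposition hAk hAkInv hM y
  rw [Finset.sum_add_distrib, ← Finset.mul_sum, hcross] at hsq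
  rw [decompositionEnergy, ← Finset.mul_sum] at hopt ⊢
  linarith

theorem isLeast_decompositionEnergy (hA : A.IsSymmetric) (hpos : ∀ x, 0 ≤ ⟪A x, x⟫) (y : V) :
    IsLeast {s | ∃ w : ∀ k, Vk k, ∑ k, R k (w k) = y ∧ s = decompositionEnergy A R w}
      ((1 / 2) * ⟪M y, y⟫) :=
  ⟨⟨_, sum_optimalDecomposition hM y,
      (decompositionEnergy_optimalDecomposition hAk hAkInv hM y).symm⟩,
    by rintro s ⟨w, hw, rfl⟩; exact inner_le_decompositionEnergy hAk hAkInv hM hA hpos hw⟩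

end AdditiveSchwarz

open AdditiveSchwarz in
theorem Mtau_eq_quadratic_surrogate_general
    {V : Type*} [NormedAddCommGroup V] [InnerProductSpace ℝ V] [FiniteDimensional ℝ V]
    {N : ℕ} (Vk : Fin N → Type*) [∀ k, NormedAddCommGroup (Vk k)]
    [∀ k, InnerProductSpace ℝ (Vk k)] [∀ k, FiniteDimensional ℝ (Vk k)]
    -- A self-adjoint positive definite, f ∈ V
    (A : V →ₗ[ℝ] V) (hAsym : A.IsSymmetric)
    (hApd : ∀ v : V, v ≠ 0 → 0 < ⟪A v, v⟫)
    -- the maps Rₖ* with surjective adjoints Rₖ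
    (Rstar : ∀ k, Vk k →ₗ[ℝ] V)
    -- local stiffness operators Aₖ and their inverses
    (Ak : ∀ k, Vk k →ₗ[ℝ] Vk k)
    (hAk : ∀ k, ∀ x y : Vk k, ⟪Ak k x, y⟫ = ⟪A (Rstar k x), Rstar k y⟫)
    (AkInv : ∀ k, Vk k →ₗ[ℝ] Vk k)
    (hAkInv₂ : ∀ k, Ak k ∘ₗ AkInv k = LinearMap.id)
    -- the quadratic energy and its Bregman distance D_F(x,y) = ½⟨A(x−y), x−y⟩
    (DF : V → V → ℝ) (hDF : ∀ x y, DF x y = (1 / 2) * ⟪A (x - y), x - y⟫)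
    -- step size
    (τ : ℝ)
    -- the functional M_τ (with G = 0)
    (Mτ : V → V → ℝ)
    (hMτ : ∀ u v, Mτ u v =
      τ * sInf { s : ℝ | ∃ w : ∀ k, Vk k,
        u - v = τ • ∑ k, Rstar k (w k) ∧ s = ∑ k, DF (v + Rstar k (w k)) v })
    -- the additive Schwarz preconditioner M = (∑ₖ Rₖ* Aₖ⁻¹ Rₖ)⁻¹
    (M : V →ₗ[ℝ] V)
    (hM₂ : (∑ k, Rstar k ∘ₗ AkInv k ∘ₗ LinearMap.adjoint (Rstar k)) ∘ₗ M = LinearMap.id) :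
    ∀ u v : V, Mτ u v = (1 / (2 * τ)) * ⟪M (u - v), u - v⟫ := by
  intro u v
  -- at `τ = 0` both sides vanish, the right one because `1 / 0 = 0`
  rcases eq_or_ne τ 0 with rfl | hτ
  · simp [hMτ]
  have hApos : ∀ x : V, 0 ≤ ⟪A x, x⟫ := fun x => by
    rcases eq_or_ne x 0 with rfl | hx
    · simp
    · exact (hApd x hx).le
  have hconstraint : ∀ w : ∀ k, Vk k,
      u - v = τ • ∑ k, Rstar k (w k) ↔ ∑ k, Rstar k (w k) = τ⁻¹ • (u - v) := fun w => by
    rw [eq_inv_smul_iff₀ hτ, eq_comm]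
  have henergy : ∀ w : ∀ k, Vk k,
      ∑ k, DF (v + Rstar k (w k)) v = decompositionEnergy A Rstar w := fun w => by
    simp only [hDF, add_sub_cancel_left, decompositionEnergy]
  simp only [hMτ, hconstraint, henergy,
    (isLeast_decompositionEnergy hAk hAkInv₂ hM₂ hAsym hApos _).csInf_eq, map_smul,
    real_inner_smul_left, real_inner_smul_right]
  field_simp

/-- In the linear case `F(u) = ½⟨Au,u⟩ − ⟨f,u⟩`, `G = 0`, the functional `M_τ` of the
generalized additive Schwarz lemma satisfies `M_τ(u,v) = (1/(2τ))⟨M(u−v), u−v⟩`, where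
`M = (∑ₖ Rₖ* Aₖ⁻¹ Rₖ)⁻¹` is the additive Schwarz preconditioner. -/
theorem Mtau_eq_quadratic_surrogate
    {V : Type*} [NormedAddCommGroup V] [InnerProductSpace ℝ V] [FiniteDimensional ℝ V]
    {N : ℕ} (Vk : Fin N → Type*) [∀ k, NormedAddCommGroup (Vk k)]
    [∀ k, InnerProductSpace ℝ (Vk k)] [∀ k, FiniteDimensional ℝ (Vk k)]
    -- A self-adjoint positive definite, f ∈ V
    (A : V →ₗ[ℝ] V) (hAsym : A.IsSymmetric)
    (hApd : ∀ v : V, v ≠ 0 → 0 < ⟪A v, v⟫)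
    (f : V)
    -- the maps Rₖ* with surjective adjoints Rₖ
    (Rstar : ∀ k, Vk k →ₗ[ℝ] V)
    (hsurj : ∀ k, Function.Surjective (LinearMap.adjoint (Rstar k)))
    -- space decomposition V = ∑ₖ Rₖ* Vk
    (hdecomp : ∀ v : V, ∃ w : ∀ k, Vk k, v = ∑ k, Rstar k (w k))
    -- local stiffness operators Aₖ and their inverses
    (Ak : ∀ k, Vk k →ₗ[ℝ] Vk k)
    (hAk : ∀ k, ∀ x y : Vk k, ⟪Ak k x, y⟫ = ⟪A (Rstar k x), Rstar k y⟫)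
    (AkInv : ∀ k, Vk k →ₗ[ℝ] Vk k)
    (hAkInv₁ : ∀ k, AkInv k ∘ₗ Ak k = LinearMap.id)
    (hAkInv₂ : ∀ k, Ak k ∘ₗ AkInv k = LinearMap.id)
    -- the quadratic energy and its Bregman distance D_F(x,y) = ½⟨A(x−y), x−y⟩
    (F : V → ℝ) (hF : ∀ v, F v = (1 / 2) * ⟪A v, v⟫ - ⟪f, v⟫)
    (DF : V → V → ℝ) (hDF : ∀ x y, DF x y = (1 / 2) * ⟪A (x - y), x - y⟫)
    -- step size
    (τ : ℝ) (hτ : 0 < τ)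
    -- the functional M_τ (with G = 0)
    (Mτ : V → V → ℝ)
    (hMτ : ∀ u v, Mτ u v =
      τ * sInf { s : ℝ | ∃ w : ∀ k, Vk k,
        u - v = τ • ∑ k, Rstar k (w k) ∧ s = ∑ k, DF (v + Rstar k (w k)) v })
    -- the additive Schwarz preconditioner M = (∑ₖ Rₖ* Aₖ⁻¹ Rₖ)⁻¹
    (M : V →ₗ[ℝ] V)
    (hM₁ : M ∘ₗ (∑ k, Rstar k ∘ₗ AkInv k ∘ₗ LinearMap.adjoint (Rstar k)) = LinearMap.id)
    (hM₂ : (∑ k, Rstar k ∘ₗ AkInv k ∘ₗ LinearMap.adjoint (Rstar k)) ∘ₗ M = LinearMap.id) :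
    ∀ u v : V, Mτ u v = (1 / (2 * τ)) * ⟪M (u - v), u - v⟫ :=
  Mtau_eq_quadratic_surrogate_general Vk A hAsym hApd Rstar Ak hAk AkInv hAkInv₂ DF hDF τ Mτ hMτ M
    hM₂
end

section
/- For every real s ≥ 2 and every dimension d, there exists a constant c > 0 depending only on s such that for all a, b ∈ ℝ^d: (1/s)|a|^s − (1/s)|b|^s − ⟨|b|^{s−2}b, a − b⟩ ≥ c|a − b|^s, where |·| and ⟨·,·⟩ are the Euclidean norm and inner product and |b|^{s−2}b is understood as 0 when b = 0. (This is the pointwise inequality underlying the sharpness with exponent p = s of the s-Laplacian energy F(u) = (1/s)∫_Ω |∇u|^s dx − ∫_Ω fu dx for s > 2.) -/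
/-!
Write `B = ‖b‖`, `H = ‖a - b‖`, `t = ⟪b, a - b⟫`, so that `‖a‖² = B² + 2t + H²`. Everything follows
from the tangent-line inequality for the convex function `r ↦ r ^ (s/2)` on `[0, ∞)`, applied at
`r = ‖a‖²` with a base point chosen according to the size of `H`. If `H ≤ 2B`, the tangent at `B²`
gives the Bregman distance `≥ B^(s-2) H² / 2 ≥ (H/2)^(s-2) H² / 2`. If `H ≥ 2B`, the tangent at
`(H - B)²` gives the Bregman distance `≥ (H - B)^s / s ≥ (H/2)^s / s`: its linear term
`(H - B)^(s-2) (t + BH)` dominates `B^(s-2) (t + BH)` because `t ≥ -BH` and `H - B ≥ B`.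
Both cases give `c = 1 / (s 2^s)`.
-/

open RealInnerProductSpace

lemma rpow_tangent_le {x y p : ℝ} (hx : 0 ≤ x) (hy : 0 ≤ y) (hp : 1 ≤ p) :
    y ^ p + p * y ^ (p - 1) * (x - y) ≤ x ^ p := by
  rcases hy.eq_or_lt with rfl | hy
  · rcases hp.eq_or_lt with rfl | hp
    · simp
    · simp [Real.zero_rpow (by linarith : p ≠ 0), Real.zero_rpow (by linarith : p - 1 ≠ 0),
        Real.rpow_nonneg hx]
  · have bernoulli := one_add_mul_self_le_rpow_one_add
      (by linarith [div_nonneg hx hy.le] : -1 ≤ x / y - 1) hp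
    rw [add_sub_cancel, Real.div_rpow hx hy.le, le_div_iff₀ (by positivity)] at bernoulli
    calc y ^ p + p * y ^ (p - 1) * (x - y) = (1 + p * (x / y - 1)) * y ^ p := by
          rw [Real.rpow_sub_one hy.ne']; field_simp
      _ ≤ x ^ p := bernoulli

lemma rpow_tangent_sq_le {x y s : ℝ} (hx : 0 ≤ x) (hy : 0 ≤ y) (hs : 2 ≤ s) :
    1 / s * y ^ s + 1 / 2 * y ^ (s - 2) * (x ^ 2 - y ^ 2) ≤ 1 / s * x ^ s := by
  have sq_rpow {z : ℝ} (hz : 0 ≤ z) (q : ℝ) : (z ^ 2) ^ (q / 2) = z ^ q := by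
    rw [← Real.rpow_natCast_mul hz]; push_cast; ring_nf
  have tangent := rpow_tangent_le (sq_nonneg x) (sq_nonneg y) (by linarith : 1 ≤ s / 2)
  rw [sq_rpow hx, sq_rpow hy, show s / 2 - 1 = (s - 2) / 2 by ring, sq_rpow hy] at tangent
  have hs0 : 0 < s := by linarith
  calc 1 / s * y ^ s + 1 / 2 * y ^ (s - 2) * (x ^ 2 - y ^ 2)
      = 1 / s * (y ^ s + s / 2 * y ^ (s - 2) * (x ^ 2 - y ^ 2)) := by field_simp
    _ ≤ 1 / s * x ^ s := by gcongr

lemma rpow_eq_rpow_sub_two_mul_sq {z s : ℝ} (hz : 0 ≤ z) (hs : s ≠ 0) :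
    z ^ s = z ^ (s - 2) * z ^ 2 := by
  rw [← Real.rpow_natCast, ← Real.rpow_add' hz (by simpa using hs)]
  norm_num

section Bregman

variable {E : Type*} [NormedAddCommGroup E] [InnerProductSpace ℝ E] {s : ℝ}

noncomputable def powBregman (s : ℝ) (a b : E) : ℝ :=
  1 / s * ‖a‖ ^ s - 1 / s * ‖b‖ ^ s - ⟪‖b‖ ^ (s - 2) • b, a - b⟫

lemma powBregman_eq (s : ℝ) (a b : E) :
    powBregman s a b = 1 / s * ‖a‖ ^ s - 1 / s * ‖b‖ ^ s - ‖b‖ ^ (s - 2) * ⟪b, a - b⟫ := by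
  rw [powBregman, real_inner_smul_left]

lemma norm_sq_eq_norm_sq_add_inner_add_norm_sub_sq (a b : E) :
    ‖a‖ ^ 2 = ‖b‖ ^ 2 + 2 * ⟪b, a - b⟫ + ‖a - b‖ ^ 2 := by
  simpa using norm_add_sq_real b (a - b)

lemma half_mul_rpow_mul_sq_le_powBregman (hs : 2 ≤ s) (a b : E) :
    1 / 2 * ‖b‖ ^ (s - 2) * ‖a - b‖ ^ 2 ≤ powBregman s a b := by
  have tangent := rpow_tangent_sq_le (norm_nonneg a) (norm_nonneg b) hs
  rw [norm_sq_eq_norm_sq_add_inner_add_norm_sub_sq a b] at tangent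
  rw [powBregman_eq]
  linear_combination tangent

lemma le_powBregman_of_norm_sub_le_two_mul (hs : 2 ≤ s) {a b : E} (h : ‖a - b‖ ≤ 2 * ‖b‖) :
    1 / s * (‖a - b‖ / 2) ^ s ≤ powBregman s a b := by
  have hs0 : 0 < s := by linarith
  calc 1 / s * (‖a - b‖ / 2) ^ s
      = 1 / (4 * s) * ((‖a - b‖ / 2) ^ (s - 2) * ‖a - b‖ ^ 2) := by
        rw [rpow_eq_rpow_sub_two_mul_sq (by positivity) hs0.ne']; field_simp; ring
    _ ≤ 1 / 2 * ((‖a - b‖ / 2) ^ (s - 2) * ‖a - b‖ ^ 2) := by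
        gcongr; linarith
    _ ≤ 1 / 2 * ‖b‖ ^ (s - 2) * ‖a - b‖ ^ 2 := by
        rw [← mul_assoc]; gcongr; linarith
    _ ≤ powBregman s a b := half_mul_rpow_mul_sq_le_powBregman hs a b

lemma le_powBregman_of_two_mul_le_norm_sub (hs : 2 ≤ s) {a b : E} (h : 2 * ‖b‖ ≤ ‖a - b‖) :
    1 / s * (‖a - b‖ / 2) ^ s ≤ powBregman s a b := by
  set B := ‖b‖
  set H := ‖a - b‖
  set t := ⟪b, a - b⟫
  have hB : 0 ≤ B := norm_nonneg b
  have ht : 0 ≤ t + B * H := by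
    linarith [neg_le_of_abs_le (abs_real_inner_le_norm b (a - b))]
  have tangent := rpow_tangent_sq_le (norm_nonneg a) (by linarith : 0 ≤ H - B) hs
  have hcoef : B ^ (s - 2) ≤ (H - B) ^ (s - 2) := by gcongr; linarith
  have hBs : 1 / s * B ^ s ≤ B ^ (s - 2) * (B * H) :=
    calc 1 / s * B ^ s ≤ B ^ s :=
          mul_le_of_le_one_left (by positivity) (by rw [div_le_one (by linarith)]; linarith)
      _ = B ^ (s - 2) * B ^ 2 := rpow_eq_rpow_sub_two_mul_sq hB (by linarith)
      _ ≤ B ^ (s - 2) * (B * H) := by gcongr; nlinarith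
  calc 1 / s * (H / 2) ^ s ≤ 1 / s * (H - B) ^ s := by gcongr; linarith
    _ ≤ 1 / s * (H - B) ^ s + (B ^ (s - 2) * (B * H) - 1 / s * B ^ s) := by linarith
    _ ≤ 1 / s * (H - B) ^ s + (H - B) ^ (s - 2) * (t + B * H) - B ^ (s - 2) * t
          - 1 / s * B ^ s := by
        linarith [mul_le_mul_of_nonneg_right hcoef ht]
    _ = 1 / s * (H - B) ^ s + 1 / 2 * (H - B) ^ (s - 2) * (‖a‖ ^ 2 - (H - B) ^ 2)
          - 1 / s * B ^ s - B ^ (s - 2) * t := by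
        rw [norm_sq_eq_norm_sq_add_inner_add_norm_sub_sq a b]; ring
    _ ≤ powBregman s a b := by rw [powBregman_eq]; linarith

end Bregman

/-- For every `s ≥ 2` there is a constant `c > 0` depending only on `s` such that for all
`a, b ∈ ℝ^d`, the Bregman distance of `(1/s)|·|^s` satisfies
`(1/s)|a|^s − (1/s)|b|^s − ⟨|b|^{s−2} b, a − b⟩ ≥ c |a − b|^s`. -/
theorem sLaplacian_bregman_lower_bound :
    ∀ s : ℝ, 2 ≤ s → ∃ c : ℝ, 0 < c ∧
      ∀ d : ℕ, ∀ a b : EuclideanSpace ℝ (Fin d),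
        c * ‖a - b‖ ^ s ≤
          (1 / s) * ‖a‖ ^ s - (1 / s) * ‖b‖ ^ s - ⟪(‖b‖ ^ (s - 2)) • b, a - b⟫ := by
  intro s hs
  refine ⟨1 / (s * 2 ^ s), by positivity, fun d a b => ?_⟩
  have hc : 1 / (s * 2 ^ s) * ‖a - b‖ ^ s = 1 / s * (‖a - b‖ / 2) ^ s := by
    rw [Real.div_rpow (norm_nonneg _) zero_le_two]; field_simp
  rw [hc]
  rcases le_total ‖a - b‖ (2 * ‖b‖) with h | h
  · exact le_powBregman_of_norm_sub_le_two_mul hs h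
  · exact le_powBregman_of_two_mul_le_norm_sub hs h
end

section
/- Let V be a finite-dimensional real inner product space, F : V → ℝ convex and differentiable with L-Lipschitz continuous gradient, G : V → ℝ convex and continuous, E = F + G, and let u* be a minimizer of E. Fix τ ∈ (0, 1/L] and u^(0) = v^(0) ∈ V, t_0 = 1, and for n ≥ 0 define u^(n+1) as the minimizer over V of u ↦ F(v^(n)) + ⟨∇F(v^(n)), u − v^(n)⟩ + (1/(2τ))‖u − v^(n)‖² + G(u), t_{n+1} = (1 + √(1 + 4t_n²))/2, β_n = (t_n − 1)/t_{n+1}, and v^(n+1) = u^(n+1) + β_n(u^(n+1) − u^(n)). Then for every n ≥ 1, E(u^(n)) − E(u*) ≤ 2‖u^(0) − u*‖² / (τ(n + 1)²). -/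
/-!
A forward–backward step from `w` to `p` satisfies `E p + c ‖p - z‖² ≤ E z + c ‖w - z‖²` for
every `z`, where `c = 1/(2τ)`: the model minimised by `p` is `2c`-strongly convex, lies above `E`
at `p` because `τ ≤ 1/L`, and lies below `E + c ‖· - w‖²` because `F` is convex. Applying this at
`z = (1 - 1/t_{n+1}) u_{n+1} + (1/t_{n+1}) u*`, using convexity of `E` and
`t_{n+1}² - t_{n+1} = t_n²`, shows that
`t_n² (E(u_{n+1}) - E(u*)) + c ‖t_n u_{n+1} - (t_n - 1) u_n - u*‖²` is nonincreasing in `n`;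
since `t_n ≥ (n + 2)/2`, this gives the rate.
-/

open RealInnerProductSpace Set Filter Topology

section InnerProductSpace

variable {V : Type*} [NormedAddCommGroup V] [InnerProductSpace ℝ V]

theorem ConvexOn.add_inner_le_of_hasGradientAt [CompleteSpace V] {s : Set V} {f : V → ℝ}
    {g x y : V} (hf : ConvexOn ℝ s f) (hx : x ∈ s) (hy : y ∈ s) (hg : HasGradientAt f g x) :
    f x + ⟪g, y - x⟫ ≤ f y := by
  set ℓ : ℝ →ᵃ[ℝ] V := AffineMap.lineMap x y
  have hline : HasDerivAt ℓ (y - x) 0 := by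
    simpa [ℓ] using AffineMap.hasDerivAt_lineMap (a := x) (b := y) (x := (0 : ℝ))
  have hderiv : HasDerivAt (f ∘ ℓ) ⟪g, y - x⟫ 0 := by
    have hg' : HasFDerivAt f (InnerProductSpace.toDual ℝ V g) (ℓ 0) := by
      simpa [ℓ] using hasGradientAt_iff_hasFDerivAt.mp hg
    simpa using hg'.comp_hasDerivAt 0 hline
  have hslope := (hf.comp_affineMap ℓ).le_slope_of_hasDerivAt (by simpa [ℓ]) (by simpa [ℓ])
    zero_lt_one hderiv
  simp only [slope_def_field, Function.comp_apply, ℓ, AffineMap.lineMap_apply_zero,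
    AffineMap.lineMap_apply_one, sub_zero, div_one] at hslope
  linarith

theorem StrongConvexOn.add_sq_le_of_isMinOn {s : Set V} {m : ℝ} {f : V → ℝ} {p z : V}
    (hf : StrongConvexOn s m f) (hmin : IsMinOn f s p) (hp : p ∈ s) (hz : z ∈ s) :
    f p + m / 2 * ‖z - p‖ ^ 2 ≤ f z := by
  have hsegment : ∀ l ∈ Ioo (0 : ℝ) 1, f p + (1 - l) * (m / 2 * ‖z - p‖ ^ 2) ≤ f z := by
    rintro l ⟨hl0, hl1⟩
    have hconv := hf.2 hp hz (by linarith : 0 ≤ 1 - l) hl0.le (by ring)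
    have hle := isMinOn_iff.mp hmin _ (hf.1 hp hz (by linarith : 0 ≤ 1 - l) hl0.le (by ring))
    rw [smul_eq_mul, smul_eq_mul, norm_sub_rev] at hconv
    have : l * (f p + (1 - l) * (m / 2 * ‖z - p‖ ^ 2)) ≤ l * f z := by nlinarith
    exact le_of_mul_le_mul_left this hl0
  have hcont : Continuous fun l : ℝ => f p + (1 - l) * (m / 2 * ‖z - p‖ ^ 2) := by fun_prop
  refine le_of_tendsto (x := 𝓝[>] (0 : ℝ))
    ((hcont.tendsto' 0 _ (by simp)).mono_left nhdsWithin_le_nhds) ?_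
  filter_upwards [Ioo_mem_nhdsGT one_pos] using hsegment

theorem ConvexOn.strongConvexOn_const_add_inner_add_sq {s : Set V} {G : V → ℝ}
    (hG : ConvexOn ℝ s G) (a c : ℝ) (g w : V) :
    StrongConvexOn s (2 * c) (fun x => a + ⟪g, x - w⟫ + c * ‖x - w‖ ^ 2 + G x) := by
  rw [strongConvexOn_iff_convex]
  refine ((hG.add ((innerSL ℝ (g - (2 * c) • w)).toLinearMap.convexOn hG.1)).add_const
    (a - ⟪g, w⟫ + c * ‖w‖ ^ 2)).congr fun x _ => ?_
  simp only [Pi.add_apply, ContinuousLinearMap.coe_coe, innerSL_apply_apply, norm_sub_sq_real,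
    inner_sub_left, inner_sub_right, real_inner_smul_left, real_inner_comm w x]
  ring

theorem proxGrad_step_le [CompleteSpace V] {F G : V → ℝ} {g w p : V} {c : ℝ}
    (hF : ConvexOn ℝ univ F) (hg : HasGradientAt F g w) (hG : ConvexOn ℝ univ G)
    (hdescent : F p ≤ F w + ⟪g, p - w⟫ + c * ‖p - w‖ ^ 2)
    (hmin : ∀ z, F w + ⟪g, p - w⟫ + c * ‖p - w‖ ^ 2 + G p ≤
      F w + ⟪g, z - w⟫ + c * ‖z - w‖ ^ 2 + G z)
    (z : V) :
    F p + G p + c * ‖p - z‖ ^ 2 ≤ F z + G z + c * ‖w - z‖ ^ 2 := by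
  have hgrowth := (hG.strongConvexOn_const_add_inner_add_sq (F w) c g w).add_sq_le_of_isMinOn
    (isMinOn_univ_iff.mpr hmin) (mem_univ p) (mem_univ z)
  have hsupport := hF.add_inner_le_of_hasGradientAt (mem_univ w) (mem_univ z) hg
  rw [mul_div_cancel_left₀ c two_ne_zero] at hgrowth
  rw [norm_sub_rev p z, norm_sub_rev w z]
  linarith

end InnerProductSpace

theorem sq_sub_self_one_add_sqrt_div_two (a : ℝ) :
    ((1 + √(1 + 4 * a ^ 2)) / 2) ^ 2 - (1 + √(1 + 4 * a ^ 2)) / 2 = a ^ 2 := by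
  linear_combination Real.sq_sqrt (by positivity : (0 : ℝ) ≤ 1 + 4 * a ^ 2) / 4

theorem add_half_le_one_add_sqrt_div_two (a : ℝ) : a + 1 / 2 ≤ (1 + √(1 + 4 * a ^ 2)) / 2 := by
  have : |2 * a| ≤ √(1 + 4 * a ^ 2) := Real.abs_le_sqrt (by nlinarith)
  linarith [le_abs_self (2 * a)]

theorem div_two_le_of_one_add_sqrt_recurrence {t : ℕ → ℝ} (ht0 : t 0 = 1)
    (htrec : ∀ n, t (n + 1) = (1 + √(1 + 4 * t n ^ 2)) / 2) (n : ℕ) :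
    ((n : ℝ) + 2) / 2 ≤ t n := by
  induction n with
  | zero => norm_num [ht0]
  | succ n ih =>
    rw [htrec n]
    push_cast
    linarith [add_half_le_one_add_sqrt_div_two (t n)]

section Lyapunov

variable {V : Type*} [NormedAddCommGroup V] [InnerProductSpace ℝ V]
  {E : V → ℝ} {c : ℝ} {u v : ℕ → V} {t β : ℕ → ℝ} {x : V}

def fistaLyapunov (E : V → ℝ) (c : ℝ) (u : ℕ → V) (t : ℕ → ℝ) (x : V) (n : ℕ) : ℝ :=
  t n ^ 2 * (E (u (n + 1)) - E x) + c * ‖t n • u (n + 1) - (t n - 1) • u n - x‖ ^ 2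

theorem fistaLyapunov_zero_le (ht0 : t 0 = 1) (h0 : u 0 = v 0)
    (hstep : E (u 1) + c * ‖u 1 - x‖ ^ 2 ≤ E x + c * ‖v 0 - x‖ ^ 2) :
    fistaLyapunov E c u t x 0 ≤ c * ‖u 0 - x‖ ^ 2 := by
  simp only [fistaLyapunov, ht0, sub_self, zero_smul, sub_zero, one_smul, one_pow, one_mul]
  rw [h0]
  linarith

theorem fistaLyapunov_succ_le (hE : ConvexOn ℝ univ E) {n : ℕ}
    (hstep : ∀ z, E (u (n + 2)) + c * ‖u (n + 2) - z‖ ^ 2 ≤ E z + c * ‖v (n + 1) - z‖ ^ 2)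
    (ht : 1 ≤ t (n + 1)) (htsq : t (n + 1) ^ 2 - t (n + 1) = t n ^ 2)
    (htβ : t (n + 1) * β n = t n - 1) (hv : v (n + 1) = u (n + 1) + β n • (u (n + 1) - u n)) :
    fistaLyapunov E c u t x (n + 1) ≤ fistaLyapunov E c u t x n := by
  rw [fistaLyapunov, fistaLyapunov, ← htsq]
  set T := t (n + 1)
  set W₁ := T • u (n + 2) - (T - 1) • u (n + 1) - x
  set W₀ := t n • u (n + 1) - (t n - 1) • u n - x
  have hT : T ≠ 0 := by positivity
  set z := (1 - T⁻¹) • u (n + 1) + T⁻¹ • x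
  have hEz : E z ≤ (1 - T⁻¹) * E (u (n + 1)) + T⁻¹ * E x :=
    hE.2 (mem_univ _) (mem_univ _) (sub_nonneg.mpr (inv_le_one_of_one_le₀ ht)) (by positivity)
      (by ring)
  have hp : u (n + 2) - z = T⁻¹ • W₁ := by
    simp only [W₁, z, smul_sub, smul_smul, mul_sub, inv_mul_cancel₀ hT, mul_one]
    module
  have hy : v (n + 1) - z = T⁻¹ • W₀ := by
    have hβ : β n = T⁻¹ * (t n - 1) := by rw [← htβ]; field_simp
    rw [hv, hβ]
    module
  have hz := hstep z
  rw [hp, hy, norm_smul, norm_smul, mul_pow, mul_pow, Real.norm_eq_abs, sq_abs] at hz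
  have hscaled : T ^ 2 * E (u (n + 2)) + c * ‖W₁‖ ^ 2 ≤
      (T ^ 2 - T) * E (u (n + 1)) + T * E x + c * ‖W₀‖ ^ 2 :=
    calc _ = T ^ 2 * (E (u (n + 2)) + c * (T⁻¹ ^ 2 * ‖W₁‖ ^ 2)) := by field_simp
      _ ≤ T ^ 2 * ((1 - T⁻¹) * E (u (n + 1)) + T⁻¹ * E x + c * (T⁻¹ ^ 2 * ‖W₀‖ ^ 2)) :=
          mul_le_mul_of_nonneg_left (by linarith) (sq_nonneg T)
      _ = _ := by field_simp
  linarith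

end Lyapunov

theorem div_two_le_one_div_two_mul {L τ : ℝ} (hτ : 0 < τ) (hτL : τ ≤ 1 / L) :
    L / 2 ≤ 1 / (2 * τ) := by
  have hL : 0 < L := by by_contra! hL; linarith [one_div_nonpos.mpr hL]
  rw [le_one_div hτ hL] at hτL
  calc L / 2 ≤ 1 / τ / 2 := by gcongr
    _ = 1 / (2 * τ) := by ring

theorem le_div_sq_of_sq_mul_le {a b e K : ℝ} (ha : 0 < a) (hab : a ≤ b) (hK : 0 ≤ K)
    (h : b ^ 2 * e ≤ K) : e ≤ K / a ^ 2 := by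
  rw [le_div_iff₀ (by positivity)]
  rcases le_or_gt 0 e with he | he
  · nlinarith [mul_le_mul_of_nonneg_right (pow_le_pow_left₀ ha.le hab 2) he]
  · nlinarith [sq_nonneg a]

theorem fista_convergence_general
    {V : Type*} [NormedAddCommGroup V] [InnerProductSpace ℝ V] [FiniteDimensional ℝ V]
    (F : V → ℝ) (F' : V → V) (L : ℝ)
    (hFconv : ConvexOn ℝ Set.univ F)
    (hgrad : ∀ x : V, HasGradientAt F (F' x) x)
    (hsmooth : ∀ u v : V, F u ≤ F v + ⟪F' v, u - v⟫ + (L / 2) * ‖u - v‖ ^ 2)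
    (G : V → ℝ) (hGconv : ConvexOn ℝ Set.univ G)
    (E : V → ℝ) (hE : ∀ x, E x = F x + G x)
    (ustar : V)
    (τ : ℝ) (hτ0 : 0 < τ) (hτL : τ ≤ 1 / L)
    (u v : ℕ → V) (t β : ℕ → ℝ)
    (h0 : u 0 = v 0) (ht0 : t 0 = 1)
    (hupd : ∀ n : ℕ, ∀ z : V,
      F (v n) + ⟪F' (v n), u (n + 1) - v n⟫ + (1 / (2 * τ)) * ‖u (n + 1) - v n‖ ^ 2
          + G (u (n + 1)) ≤
        F (v n) + ⟪F' (v n), z - v n⟫ + (1 / (2 * τ)) * ‖z - v n‖ ^ 2 + G z)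
    (htrec : ∀ n : ℕ, t (n + 1) = (1 + Real.sqrt (1 + 4 * t n ^ 2)) / 2)
    (hβ : ∀ n : ℕ, β n = (t n - 1) / t (n + 1))
    (hv : ∀ n : ℕ, v (n + 1) = u (n + 1) + β n • (u (n + 1) - u n)) :
    ∀ n : ℕ, 1 ≤ n →
      E (u n) - E ustar ≤ 2 * ‖u 0 - ustar‖ ^ 2 / (τ * ((n : ℝ) + 1) ^ 2) := by
  have hstep (n : ℕ) (z : V) : E (u (n + 1)) + 1 / (2 * τ) * ‖u (n + 1) - z‖ ^ 2 ≤
      E z + 1 / (2 * τ) * ‖v n - z‖ ^ 2 := by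
    have hdescent : F (u (n + 1)) ≤ F (v n) + ⟪F' (v n), u (n + 1) - v n⟫ +
        1 / (2 * τ) * ‖u (n + 1) - v n‖ ^ 2 :=
      (hsmooth (u (n + 1)) (v n)).trans <| add_le_add_right
        (mul_le_mul_of_nonneg_right (div_two_le_one_div_two_mul hτ0 hτL) (sq_nonneg _)) _
    simpa only [hE] using proxGrad_step_le hFconv (hgrad (v n)) hGconv hdescent (hupd n) z
  have ht (n : ℕ) : ((n : ℝ) + 2) / 2 ≤ t n := div_two_le_of_one_add_sqrt_recurrence ht0 htrec n
  have ht1 (n : ℕ) : 1 ≤ t n := le_trans (by linarith [n.cast_nonneg (α := ℝ)]) (ht n)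
  have hsq (n : ℕ) : t (n + 1) ^ 2 - t (n + 1) = t n ^ 2 := by
    rw [htrec]; exact sq_sub_self_one_add_sqrt_div_two (t n)
  have htβ (n : ℕ) : t (n + 1) * β n = t n - 1 := by
    rw [hβ, mul_div_cancel₀ _ (by linarith [ht1 (n + 1)])]
  have hEconv : ConvexOn ℝ univ E := (hFconv.add hGconv).congr fun x _ => (hE x).symm
  have hΦ (m : ℕ) : fistaLyapunov E (1 / (2 * τ)) u t ustar m ≤ 1 / (2 * τ) * ‖u 0 - ustar‖ ^ 2 :=
    (antitone_nat_of_succ_le (fun n => fistaLyapunov_succ_le hEconv (hstep (n + 1)) (ht1 _)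
      (hsq n) (htβ n) (hv n)) m.zero_le).trans (fistaLyapunov_zero_le ht0 h0 (hstep 0 ustar))
  intro n hn
  obtain ⟨m, rfl⟩ := Nat.exists_eq_add_of_le' hn
  have hbound : t m ^ 2 * (E (u (m + 1)) - E ustar) ≤ 1 / (2 * τ) * ‖u 0 - ustar‖ ^ 2 :=
    (le_add_of_nonneg_right (by positivity)).trans (hΦ m)
  convert le_div_sq_of_sq_mul_le (by positivity) (ht m) (by positivity) hbound using 1
  push_cast
  field_simp
  ring

/-- FISTA convergence: for a convex `F` with `L`-Lipschitz gradient and a convex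
continuous `G`, with step size `τ ∈ (0, 1/L]`, the FISTA iterates satisfy
`E(uⁿ) − E(u*) ≤ 2‖u⁰ − u*‖² / (τ(n+1)²)` for all `n ≥ 1`. -/
theorem fista_convergence
    {V : Type*} [NormedAddCommGroup V] [InnerProductSpace ℝ V] [FiniteDimensional ℝ V]
    (F : V → ℝ) (F' : V → V) (L : ℝ) (hL : 0 < L)
    (hFconv : ConvexOn ℝ Set.univ F)
    (hgrad : ∀ x : V, HasGradientAt F (F' x) x)
    (hsmooth : ∀ u v : V, F u ≤ F v + ⟪F' v, u - v⟫ + (L / 2) * ‖u - v‖ ^ 2)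
    (G : V → ℝ) (hGconv : ConvexOn ℝ Set.univ G) (hGcont : Continuous G)
    (E : V → ℝ) (hE : ∀ x, E x = F x + G x)
    (ustar : V) (hustar : ∀ x, E ustar ≤ E x)
    (τ : ℝ) (hτ0 : 0 < τ) (hτL : τ ≤ 1 / L)
    (u v : ℕ → V) (t β : ℕ → ℝ)
    (h0 : u 0 = v 0) (ht0 : t 0 = 1)
    (hupd : ∀ n : ℕ, ∀ z : V,
      F (v n) + ⟪F' (v n), u (n + 1) - v n⟫ + (1 / (2 * τ)) * ‖u (n + 1) - v n‖ ^ 2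
          + G (u (n + 1)) ≤
        F (v n) + ⟪F' (v n), z - v n⟫ + (1 / (2 * τ)) * ‖z - v n‖ ^ 2 + G z)
    (htrec : ∀ n : ℕ, t (n + 1) = (1 + Real.sqrt (1 + 4 * t n ^ 2)) / 2)
    (hβ : ∀ n : ℕ, β n = (t n - 1) / t (n + 1))
    (hv : ∀ n : ℕ, v (n + 1) = u (n + 1) + β n • (u (n + 1) - u n)) :
    ∀ n : ℕ, 1 ≤ n →
      E (u n) - E ustar ≤ 2 * ‖u 0 - ustar‖ ^ 2 / (τ * ((n : ℝ) + 1) ^ 2) :=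
  fista_convergence_general F F' L hFconv hgrad hsmooth G hGconv E hE ustar τ hτ0 hτL u v t β h0 ht0
    hupd htrec hβ hv
end

section
/- Let V be a finite-dimensional real inner product space, F : V → ℝ differentiable with L-Lipschitz continuous gradient and μ-strongly convex (0 < μ ≤ L), G : V → ℝ convex and continuous, and let u* be the minimizer of E = F + G. Fix τ ∈ (0, 1/L] and u ∈ V, and let u⁺ be the minimizer over V of w ↦ F(u) + ⟨∇F(u), w − u⟩ + (1/(2τ))‖w − u‖² + G(w). Then ‖u⁺ − u*‖² ≤ (1 − τμ)‖u − u*‖²; consequently the forward-backward splitting iterates converge linearly when E is strongly convex. -/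
/-!
The forward-backward step minimises the model
`w ↦ F u + ⟪∇F u, w - u⟫ + ‖w - u‖² / (2τ) + G w`, which is `1/τ`-strongly convex, so it grows
at least like `‖w - u⁺‖² / (2τ)` away from its minimiser `u⁺`. Evaluating at `u*`: the model at `u⁺`
dominates `E u⁺ ≥ E u*` by the descent lemma (`τ ≤ 1/L`), and the model at `u*` is at most
`E u* + (1/τ - μ) ‖u* - u‖² / 2` by strong convexity of `F`. Comparing gives the contraction.
-/

open RealInnerProductSpace Set Filter Topology

lemma StrongConvexOn.add_sq_norm_sub_le_of_isMinOn {E : Type*} [NormedAddCommGroup E]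
    [NormedSpace ℝ E] {s : Set E} {m : ℝ} {f : E → ℝ} (hf : StrongConvexOn s m f) {p z : E}
    (hp : p ∈ s) (hz : z ∈ s) (hmin : IsMinOn f s p) :
    f p + m / 2 * ‖z - p‖ ^ 2 ≤ f z := by
  have hsegment : ∀ t ∈ Ioo (0 : ℝ) 1, f p + (1 - t) * (m / 2 * ‖z - p‖ ^ 2) ≤ f z := by
    rintro t ⟨ht0, ht1⟩
    have hconv := hf.2 hz hp ht0.le (sub_nonneg.2 ht1.le) (add_sub_cancel t 1)
    have hle : f p ≤ f (t • z + (1 - t) • p) :=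
      hmin (hf.1 hz hp ht0.le (sub_nonneg.2 ht1.le) (add_sub_cancel t 1))
    simp only [smul_eq_mul] at hconv
    nlinarith
  have hlim : Tendsto (fun t : ℝ ↦ f p + (1 - t) * (m / 2 * ‖z - p‖ ^ 2)) (𝓝[>] 0)
      (𝓝 (f p + m / 2 * ‖z - p‖ ^ 2)) := by
    refine tendsto_nhdsWithin_of_tendsto_nhds ?_
    have hcont : Continuous fun t : ℝ ↦ f p + (1 - t) * (m / 2 * ‖z - p‖ ^ 2) := by fun_prop
    simpa using hcont.tendsto 0
  exact le_of_tendsto hlim (eventually_of_mem (Ioo_mem_nhdsGT one_pos) hsegment)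

section ForwardBackward

variable {V : Type*} [NormedAddCommGroup V] [InnerProductSpace ℝ V]

noncomputable def forwardBackwardModel (F : V → ℝ) (F' : V → V) (G : V → ℝ) (τ : ℝ) (u w : V) :
    ℝ :=
  F u + ⟪F' u, w - u⟫ + (1 / (2 * τ)) * ‖w - u‖ ^ 2 + G w

lemma ConvexOn.strongConvexOn_forwardBackwardModel {G : V → ℝ} (hG : ConvexOn ℝ univ G)
    (F : V → ℝ) (F' : V → V) (τ : ℝ) (u : V) :
    StrongConvexOn univ (1 / τ) (forwardBackwardModel F F' G τ u) := by
  rw [strongConvexOn_iff_convex]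
  have hlin := (innerₗ V (F' u - (1 / τ) • u)).convexOn convex_univ
  refine ((hG.add hlin).add_const (F u - ⟪F' u, u⟫ + 1 / (2 * τ) * ‖u‖ ^ 2)).congr fun w _ ↦ ?_
  simp only [forwardBackwardModel, Pi.add_apply, innerₗ_apply_apply, norm_sub_sq_real,
    inner_sub_left, inner_sub_right, real_inner_smul_left, real_inner_comm u]
  ring

end ForwardBackward

theorem forward_backward_linear_contraction_general
    {V : Type*} [NormedAddCommGroup V] [InnerProductSpace ℝ V]
    (F : V → ℝ) (F' : V → V) (L μ : ℝ)
    (hstrong : ∀ u v : V, F v + ⟪F' v, u - v⟫ + (μ / 2) * ‖u - v‖ ^ 2 ≤ F u)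
    (hsmooth : ∀ u v : V, F u ≤ F v + ⟪F' v, u - v⟫ + (L / 2) * ‖u - v‖ ^ 2)
    (G : V → ℝ) (hGconv : ConvexOn ℝ Set.univ G)
    (E : V → ℝ) (hE : ∀ x, E x = F x + G x)
    (ustar : V) (hustar : ∀ x, E ustar ≤ E x)
    (τ : ℝ) (hτ0 : 0 < τ) (hτL : τ ≤ 1 / L)
    (u uplus : V)
    (hupd : ∀ z : V,
      F u + ⟪F' u, uplus - u⟫ + (1 / (2 * τ)) * ‖uplus - u‖ ^ 2 + G uplus ≤
        F u + ⟪F' u, z - u⟫ + (1 / (2 * τ)) * ‖z - u‖ ^ 2 + G z) :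
    ‖uplus - ustar‖ ^ 2 ≤ (1 - τ * μ) * ‖u - ustar‖ ^ 2 := by
  set c := 1 / (2 * τ) with hc
  have hmin : IsMinOn (forwardBackwardModel F F' G τ u) univ uplus := fun z _ ↦ hupd z
  have hgrowth := (hGconv.strongConvexOn_forwardBackwardModel F F' τ u)
    |>.add_sq_norm_sub_le_of_isMinOn (mem_univ uplus) (mem_univ ustar) hmin
  rw [show 1 / τ / 2 = c by ring, norm_sub_rev] at hgrowth
  have hLc : L / 2 ≤ c := by
    have hL0 : 0 < L := one_div_pos.mp (hτ0.trans_le hτL)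
    linarith [(le_one_div hL0 hτ0).mpr hτL, show c = 1 / τ / 2 by ring]
  have hdescent : E uplus ≤ forwardBackwardModel F F' G τ u uplus := by
    rw [hE, forwardBackwardModel, ← hc]
    linarith [hsmooth uplus u, mul_le_mul_of_nonneg_right hLc (sq_nonneg ‖uplus - u‖)]
  have hstar : forwardBackwardModel F F' G τ u ustar ≤ E ustar + (c - μ / 2) * ‖ustar - u‖ ^ 2 := by
    rw [hE, forwardBackwardModel, ← hc]
    linarith [hstrong ustar u]
  have key : c * ‖uplus - ustar‖ ^ 2 ≤ (c - μ / 2) * ‖u - ustar‖ ^ 2 := by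
    rw [norm_sub_rev u ustar]
    linarith [hustar uplus]
  have h2τc : 2 * τ * c = 1 := by rw [hc]; field_simp
  calc ‖uplus - ustar‖ ^ 2 = 2 * τ * (c * ‖uplus - ustar‖ ^ 2) := by rw [← mul_assoc, h2τc, one_mul]
    _ ≤ 2 * τ * ((c - μ / 2) * ‖u - ustar‖ ^ 2) := by gcongr
    _ = (1 - τ * μ) * ‖u - ustar‖ ^ 2 := by linear_combination ‖u - ustar‖ ^ 2 * h2τc

/-- One-step linear contraction of forward-backward splitting under strong convexity:
if `F` is `μ`-strongly convex with `L`-Lipschitz gradient (`0 < μ ≤ L`), `G` is convex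
continuous, `u*` minimizes `E = F + G`, `τ ∈ (0, 1/L]`, and `u⁺` minimizes the
forward-backward surrogate at `u`, then `‖u⁺ − u*‖² ≤ (1 − τμ)‖u − u*‖²`. -/
theorem forward_backward_linear_contraction
    {V : Type*} [NormedAddCommGroup V] [InnerProductSpace ℝ V] [FiniteDimensional ℝ V]
    (F : V → ℝ) (F' : V → V) (L μ : ℝ) (hμ0 : 0 < μ) (hμL : μ ≤ L)
    (hgrad : ∀ x : V, HasGradientAt F (F' x) x)
    (hstrong : ∀ u v : V, F v + ⟪F' v, u - v⟫ + (μ / 2) * ‖u - v‖ ^ 2 ≤ F u)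
    (hsmooth : ∀ u v : V, F u ≤ F v + ⟪F' v, u - v⟫ + (L / 2) * ‖u - v‖ ^ 2)
    (G : V → ℝ) (hGconv : ConvexOn ℝ Set.univ G) (hGcont : Continuous G)
    (E : V → ℝ) (hE : ∀ x, E x = F x + G x)
    (ustar : V) (hustar : ∀ x, E ustar ≤ E x)
    (τ : ℝ) (hτ0 : 0 < τ) (hτL : τ ≤ 1 / L)
    (u uplus : V)
    (hupd : ∀ z : V,
      F u + ⟪F' u, uplus - u⟫ + (1 / (2 * τ)) * ‖uplus - u‖ ^ 2 + G uplus ≤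
        F u + ⟪F' u, z - u⟫ + (1 / (2 * τ)) * ‖z - u‖ ^ 2 + G z) :
    ‖uplus - ustar‖ ^ 2 ≤ (1 - τ * μ) * ‖u - ustar‖ ^ 2 :=
  forward_backward_linear_contraction_general F F' L μ hstrong hsmooth G hGconv E hE ustar hustar τ
    hτ0 hτL u uplus hupd
end
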